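/- Let X be a regular Hausdorff topological space such that for every x ∈ X no countable family of open sets has intersection equal to {x} (i.e., the pseudocharacter ψ(x, X) is uncountable at every point). Then the G_δ modification X_δ of X is selectively highly divergent, zero-dimensional (its clopen sets form a basis), and Tychonoff (completely regular Hausdorff). -/

import Mathlib

open Filter Topology

/-- A topological space `X` is *selectively highly divergent* (SHD) if for every sequence
`(U n)` of nonempty open subsets of `X` one can pick `x n ∈ U n` such that the sequence
`(x n)` has no convergent subsequence. -/
def SHD (X : Type*) [TopologicalSpace X] : Prop :=
  ∀ U : ℕ → Set X, (∀ n, IsOpen (U n)) → (∀ n, (U n).Nonempty) →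
    ∃ x : ℕ → X, (∀ n, x n ∈ U n) ∧
      ∀ (k : ℕ → ℕ) (y : X), StrictMono k →
        ¬ Filter.Tendsto (fun n => x (k n)) Filter.atTop (nhds y)

/-- The `G_δ` modification: the topology generated by the `G_δ` subsets of `X`. -/
def gdeltaTopology (X : Type*) [TopologicalSpace X] : TopologicalSpace X :=
  TopologicalSpace.generateFrom
    {S : Set X | ∃ f : ℕ → Set X, (∀ n, IsOpen (f n)) ∧ S = ⋂ n, f n}

section Aux

variable {X : Type*} [TopologicalSpace X]

lemma gdelta_isOpen_iInter (f : ℕ → Set X) (hf : ∀ n, IsOpen (f n)) :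
    IsOpen[gdeltaTopology X] (⋂ n, f n) :=
  TopologicalSpace.GenerateOpen.basic _ ⟨f, hf, rfl⟩

lemma gdelta_le {U : Set X} (hU : IsOpen U) : IsOpen[gdeltaTopology X] U := by
  have h : (⋂ _ : ℕ, U) = U := Set.iInter_const U
  rw [← h]
  exact gdelta_isOpen_iInter _ fun _ => hU

lemma gdelta_basic_nhds {U : Set X} (hU : IsOpen[gdeltaTopology X] U) :
    ∀ x ∈ U, ∃ f : ℕ → Set X, (∀ n, IsOpen (f n)) ∧ x ∈ ⋂ n, f n ∧ (⋂ n, f n) ⊆ U := by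
  have hU' : TopologicalSpace.GenerateOpen
      {S : Set X | ∃ f : ℕ → Set X, (∀ n, IsOpen (f n)) ∧ S = ⋂ n, f n} U := hU
  clear hU
  induction hU' with
  | basic S hS =>
    rintro x hx
    obtain ⟨f, hf, rfl⟩ := hS
    exact ⟨f, hf, hx, subset_rfl⟩
  | univ =>
    intro x _
    exact ⟨fun _ => Set.univ, fun _ => isOpen_univ, by simp, by simp⟩
  | inter S T _ _ ihS ihT =>
    rintro x ⟨hxS, hxT⟩
    obtain ⟨f, hf, hxf, hfS⟩ := ihS x hxS
    obtain ⟨g, hg, hxg, hgT⟩ := ihT x hxT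
    refine ⟨fun n => f n ∩ g n, fun n => (hf n).inter (hg n), ?_, ?_⟩
    · simp only [Set.mem_iInter] at hxf hxg ⊢
      exact fun n => ⟨hxf n, hxg n⟩
    · intro z hz
      simp only [Set.mem_iInter, Set.mem_inter_iff] at hz
      exact ⟨hfS (Set.mem_iInter.2 fun n => (hz n).1), hgT (Set.mem_iInter.2 fun n => (hz n).2)⟩
  | sUnion 𝒮 _ ih =>
    rintro x hx
    obtain ⟨S, hS𝒮, hxS⟩ := hx
    obtain ⟨f, hf, hxf, hfS⟩ := ih S hS𝒮 x hxS
    exact ⟨f, hf, hxf, hfS.trans (Set.subset_sUnion_of_mem hS𝒮)⟩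

/-- Under the pseudocharacter hypothesis, every nonempty δ-open set is infinite. -/
lemma gdelta_open_infinite [T2Space X]
    (hpsi : ∀ x : X, ¬ ∃ f : ℕ → Set X, (∀ n, IsOpen (f n)) ∧ (⋂ n, f n) = {x})
    {U : Set X} (hU : IsOpen[gdeltaTopology X] U) (hne : U.Nonempty) : U.Infinite := by
  obtain ⟨x, hx⟩ := hne
  obtain ⟨f, hf, hxf, hfU⟩ := gdelta_basic_nhds hU x hx
  intro hfin
  have hGfin : (⋂ n, f n).Finite := hfin.subset hfU
  set S : Set X := (⋂ n, f n) \ {x} with hS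
  have hSfin : S.Finite := hGfin.diff
  have sep : ∀ a : X, ∃ W : Set X, IsOpen W ∧ x ∈ W ∧ (a ≠ x → a ∉ W) := by
    intro a
    by_cases h : a = x
    · exact ⟨Set.univ, isOpen_univ, trivial, fun h' => absurd h h'⟩
    · obtain ⟨u, v, hu, hv, hxu, hav, hd⟩ := t2_separation (Ne.symm h)
      exact ⟨u, hu, hxu, fun _ hmem => (Set.disjoint_right.mp hd hav) hmem⟩
  choose W hWopen hxW hWavoid using sep
  apply hpsi x
  refine ⟨fun n => f n ∩ ⋂ a ∈ S, W a, fun n => (hf n).inter (hSfin.isOpen_biInter fun a _ => hWopen a), ?_⟩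
  apply Set.Subset.antisymm
  · intro z hz
    simp only [Set.mem_iInter, Set.mem_inter_iff] at hz
    have hzG : z ∈ ⋂ n, f n := Set.mem_iInter.2 fun n => (hz n).1
    have hzW : ∀ a ∈ S, z ∈ W a := by
      have := (hz 0).2
      simpa using this
    by_contra hzx
    have hzx' : z ≠ x := fun h => hzx (by simp [h])
    have hzS : z ∈ S := ⟨hzG, hzx'⟩
    exact hWavoid z hzx' (hzW z hzS)
  · intro z hz
    simp only [Set.mem_singleton_iff] at hz
    subst hz
    simp only [Set.mem_iInter, Set.mem_inter_iff]
    intro n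
    refine ⟨Set.mem_iInter.1 hxf n, ?_⟩
    exact fun a _ => hxW a

/-- Auxiliary recursion: the finite set of previously picked points. -/
noncomputable def pickAux {X : Type*} [DecidableEq X] (U : ℕ → Set X)
    (h : ∀ n (s : Finset X), (U n \ ↑s).Nonempty) : ℕ → Finset X
  | 0 => ∅
  | n + 1 => insert ((h n (pickAux U h n)).choose) (pickAux U h n)

/-- The picked sequence. -/
noncomputable def pickSeq {X : Type*} [DecidableEq X] (U : ℕ → Set X)
    (h : ∀ n (s : Finset X), (U n \ ↑s).Nonempty) : ℕ → X :=
  fun n => (h n (pickAux U h n)).choose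

lemma pickSeq_spec {X : Type*} [DecidableEq X] (U : ℕ → Set X)
    (h : ∀ n (s : Finset X), (U n \ ↑s).Nonempty) (n : ℕ) :
    pickSeq U h n ∈ U n \ ↑(pickAux U h n) :=
  (h n (pickAux U h n)).choose_spec

lemma pickAux_mono {X : Type*} [DecidableEq X] (U : ℕ → Set X)
    (h : ∀ n (s : Finset X), (U n \ ↑s).Nonempty) {m n : ℕ} (hmn : m ≤ n) :
    pickAux U h m ⊆ pickAux U h n := by
  induction hmn with
  | refl => exact subset_rfl
  | step h' ih => exact ih.trans (by rw [pickAux]; exact Finset.subset_insert _ _)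

lemma pickSeq_mem_pickAux {X : Type*} [DecidableEq X] (U : ℕ → Set X)
    (h : ∀ n (s : Finset X), (U n \ ↑s).Nonempty) {m n : ℕ} (hmn : m < n) :
    pickSeq U h m ∈ pickAux U h n := by
  have : pickSeq U h m ∈ pickAux U h (m + 1) := by
    rw [pickAux]
    exact Finset.mem_insert_self _ _
  exact pickAux_mono U h hmn this

lemma pickSeq_ne {X : Type*} [DecidableEq X] (U : ℕ → Set X)
    (h : ∀ n (s : Finset X), (U n \ ↑s).Nonempty) {m n : ℕ} (hmn : m < n) :
    pickSeq U h n ≠ pickSeq U h m := by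
  intro heq
  have h1 := (pickSeq_spec U h n).2
  rw [heq] at h1
  exact h1 (pickSeq_mem_pickAux U h hmn)

/-- The nested clopen construction via regularity. -/
lemma gdelta_clopen_basis [RegularSpace X] (f : ℕ → Set X) (hf : ∀ n, IsOpen (f n))
    {x : X} (hx : x ∈ ⋂ n, f n) :
    ∃ H : Set X, @IsClopen X (gdeltaTopology X) H ∧ x ∈ H ∧ H ⊆ ⋂ n, f n := by
  have hxn : ∀ n, x ∈ f n := Set.mem_iInter.1 hx
  -- step: given an open neighbourhood, shrink with closure inside the intersection with f n
  have step : ∀ (n : ℕ) (V : Set X), IsOpen V → x ∈ V →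
      ∃ V' : Set X, (IsOpen V' ∧ x ∈ V') ∧ closure V' ⊆ V ∩ f n := by
    intro n V hV hxV
    have hmem : V ∩ f n ∈ nhds x := ((hV.inter (hf n)).mem_nhds ⟨hxV, hxn n⟩)
    obtain ⟨t, ht, htc, hts⟩ := exists_mem_nhds_isClosed_subset hmem
    refine ⟨interior t, ⟨isOpen_interior, mem_interior_iff_mem_nhds.2 ht⟩, ?_⟩
    calc closure (interior t) ⊆ closure t := closure_mono interior_subset
    _ = t := htc.closure_eq
    _ ⊆ V ∩ f n := hts
  choose step' hstep1 hstep2 using step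
  -- build the nested sequence
  let g : ℕ → {V : Set X // IsOpen V ∧ x ∈ V} := fun n =>
    Nat.rec ⟨step' 0 Set.univ isOpen_univ trivial,
        hstep1 0 Set.univ isOpen_univ trivial⟩
      (fun n ih => ⟨step' (n + 1) ih.1 ih.2.1 ih.2.2,
        hstep1 (n + 1) ih.1 ih.2.1 ih.2.2⟩) n
  have hg0 : closure (g 0).1 ⊆ Set.univ ∩ f 0 :=
    hstep2 0 Set.univ isOpen_univ trivial
  have hgs : ∀ n, closure (g (n + 1)).1 ⊆ (g n).1 ∩ f (n + 1) := fun n =>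
    hstep2 (n + 1) (g n).1 (g n).2.1 (g n).2.2
  refine ⟨⋂ n, (g n).1, ⟨?_, ?_⟩, ?_, ?_⟩
  · -- closed in the δ topology (indeed closed in X)
    have hXclosed : IsClosed (⋂ n, (g n).1) := by
      have heq : (⋂ n, (g n).1) = ⋂ n, closure (g (n + 1)).1 := by
        apply Set.Subset.antisymm
        · exact Set.subset_iInter fun n =>
            (Set.iInter_subset _ (n + 1)).trans subset_closure
        · intro z hz
          apply Set.mem_iInter.2
          intro n
          exact ((hgs n) (Set.mem_iInter.1 hz n)).1
      rw [heq]
      exact isClosed_iInter fun n => isClosed_closure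
    exact (@isOpen_compl_iff X _ (gdeltaTopology X)).mp (gdelta_le hXclosed.isOpen_compl)
  · exact gdelta_isOpen_iInter _ fun n => (g n).2.1
  · exact Set.mem_iInter.2 fun n => (g n).2.2
  · intro z hz
    apply Set.mem_iInter.2
    intro n
    cases n with
    | zero => exact (hg0 (subset_closure (Set.mem_iInter.1 hz 0))).2
    | succ m => exact ((hgs m) (subset_closure (Set.mem_iInter.1 hz (m + 1)))).2

lemma isOpen_mem_nhds' {X : Type*} (t : TopologicalSpace X) {s : Set X} {x : X}
    (hs : IsOpen[t] s) (hx : x ∈ s) : s ∈ @nhds X t x :=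
  hs.mem_nhds hx

lemma isClosed_compl_open' {X : Type*} (t : TopologicalSpace X) {s : Set X}
    (h : IsClosed[t] s) : IsOpen[t] sᶜ :=
  h.isOpen_compl

lemma isLocallyConstant_continuous' {X Y : Type*} (t : TopologicalSpace X)
    [TopologicalSpace Y] {f : X → Y} (h : @IsLocallyConstant X Y t f) :
    Continuous[t, _] f :=
  @IsLocallyConstant.continuous X Y t _ f h

end Aux

/-- If `X` is regular Hausdorff and every point has uncountable pseudocharacter,
then the `G_δ` modification `X_δ` is SHD, zero-dimensional and Tychonoff. -/
theorem gdelta_modification_shd {X : Type*} [TopologicalSpace X] [T2Space X] [RegularSpace X]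
    (hpsi : ∀ x : X, ¬ ∃ f : ℕ → Set X, (∀ n, IsOpen (f n)) ∧ (⋂ n, f n) = {x}) :
    @SHD X (gdeltaTopology X) ∧
    @TopologicalSpace.IsTopologicalBasis X (gdeltaTopology X)
      {s : Set X | @IsClopen X (gdeltaTopology X) s} ∧
    @T2Space X (gdeltaTopology X) ∧
    @CompletelyRegularSpace X (gdeltaTopology X) := by
  classical
  have hbasis : @TopologicalSpace.IsTopologicalBasis X (gdeltaTopology X)
      {s : Set X | @IsClopen X (gdeltaTopology X) s} := by
    refine @TopologicalSpace.isTopologicalBasis_of_isOpen_of_nhds X (gdeltaTopology X) _ ?_ ?_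
    · exact fun u hu => hu.2
    · intro a u ha hu
      obtain ⟨f, hf, haf, hfu⟩ := gdelta_basic_nhds hu a ha
      obtain ⟨H, hH, haH, hHf⟩ := gdelta_clopen_basis f hf haf
      exact ⟨H, hH, haH, hHf.trans hfu⟩
  have hT2 : @T2Space X (gdeltaTopology X) := by
    refine @T2Space.mk X (gdeltaTopology X) ?_
    intro a b hab
    obtain ⟨u, v, hu, hv, hau, hbv, hd⟩ := t2_separation hab
    exact ⟨u, v, gdelta_le hu, gdelta_le hv, hau, hbv, hd⟩
  refine ⟨?_, hbasis, hT2, ?_⟩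
  · -- SHD
    intro U hopen hne
    have hfin : ∀ n (s : Finset X), (U n \ ↑s).Nonempty := fun n s =>
      ((gdelta_open_infinite hpsi (hopen n) (hne n)).diff s.finite_toSet).nonempty
    refine ⟨pickSeq U hfin, fun n => (pickSeq_spec U hfin n).1, ?_⟩
    intro k y hk hten
    have sep : ∀ m : ℕ, ∃ W : Set X, IsOpen W ∧ y ∈ W ∧
        (pickSeq U hfin (k m) ≠ y → pickSeq U hfin (k m) ∉ W) := by
      intro m
      by_cases h : pickSeq U hfin (k m) = y
      · exact ⟨Set.univ, isOpen_univ, trivial, fun h' => absurd h h'⟩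
      · obtain ⟨u, v, hu, hv, hyu, hv', hd⟩ := t2_separation (Ne.symm h)
        exact ⟨u, hu, hyu, fun _ hmem => Set.disjoint_left.mp hd hmem hv'⟩
    choose W hWopen hyW hWav using sep
    have hG : IsOpen[gdeltaTopology X] (⋂ m, W m) := gdelta_isOpen_iInter W hWopen
    have hyG : (⋂ m, W m) ∈ @nhds X (gdeltaTopology X) y :=
      isOpen_mem_nhds' _ hG (Set.mem_iInter.2 hyW)
    have hmem : ∀ᶠ n in atTop, pickSeq U hfin (k n) ∈ ⋂ m, W m := hten.eventually hyG
    obtain ⟨N, hN⟩ := eventually_atTop.1 hmem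
    have hval : ∀ n, N ≤ n → pickSeq U hfin (k n) = y := by
      intro n hn
      by_contra h
      exact hWav n h (Set.mem_iInter.1 (hN n hn) n)
    have h1 : pickSeq U hfin (k (N + 1)) = pickSeq U hfin (k N) := by
      rw [hval N le_rfl, hval (N + 1) (Nat.le_succ N)]
    exact pickSeq_ne U hfin (hk (Nat.lt_succ_self N)) h1
  · -- completely regular
    refine @CompletelyRegularSpace.mk X (gdeltaTopology X) ?_
    intro x K hK hxK
    have hopen : IsOpen[gdeltaTopology X] Kᶜ := hK.isOpen_compl
    obtain ⟨f, hf, hxf, hfK⟩ := gdelta_basic_nhds hopen x hxK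
    obtain ⟨H, hH, hxH, hHf⟩ := gdelta_clopen_basis f hf hxf
    refine ⟨fun z => if z ∈ H then 0 else 1, ?_, by simp [hxH], ?_⟩
    · have hlc : @IsLocallyConstant X unitInterval (gdeltaTopology X)
          (fun z => if z ∈ H then 0 else 1) := by
        intro s
        by_cases h0 : (0 : unitInterval) ∈ s <;> by_cases h1 : (1 : unitInterval) ∈ s
        · have : (fun z => if z ∈ H then (0 : unitInterval) else 1) ⁻¹' s = Set.univ := by
            ext z; by_cases hz : z ∈ H <;> simp [hz, h0, h1]
          rw [this]; exact @isOpen_univ X (gdeltaTopology X)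
        · have : (fun z => if z ∈ H then (0 : unitInterval) else 1) ⁻¹' s = H := by
            ext z; by_cases hz : z ∈ H <;> simp [hz, h0, h1]
          rw [this]; exact hH.2
        · have : (fun z => if z ∈ H then (0 : unitInterval) else 1) ⁻¹' s = Hᶜ := by
            ext z; by_cases hz : z ∈ H <;> simp [hz, h0, h1]
          rw [this]; exact isClosed_compl_open' _ hH.1
        · have : (fun z => if z ∈ H then (0 : unitInterval) else 1) ⁻¹' s = ∅ := by
            ext z; by_cases hz : z ∈ H <;> simp [hz, h0, h1]
          rw [this]; exact @isOpen_empty X (gdeltaTopology X)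
      exact isLocallyConstant_continuous' _ hlc
    · intro z hz
      have hzH : z ∉ H := fun h => (hfK (hHf h)) hz
      simp [hzH]
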